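/- arXiv:2001.09787 — 2 statements merged into one kernel-verified Lean document; each statement's English description precedes it below -/
import Mathlib

section
/- Given a system with output σ : A → N × A and a detector a : B → (1 + B)^N, the map Join(σ, a) : A × B → 1 + (A × B) defined by Join(σ,a)(x,y) = ⇓ if (a y)(out_σ x) = ⇓ and (tr_σ x, (a y)(out_σ x)) otherwise, together with Join(f, g) = f × g on morphisms, is a bifunctor from Sys(S) × Sys(D) to Sys(T); in particular, if f : σ → τ is an S-morphism and g : a → b a D-morphism, then f × g is a T-morphism from Join(σ, a) to Join(τ, b). -/
/-- A morphism of systems with output (`S X = N × X` coalgebras). -/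
def SMorph {A A' N : Type*} (out : A → N) (tr : A → A) (out' : A' → N) (tr' : A' → A')
    (f : A → A') : Prop :=
  (∀ x, out' (f x) = out x) ∧ ∀ x, f (tr x) = tr' (f x)

/-- A morphism of detectors (`D X = (1 + X)^N` coalgebras). -/
def DetMorph {B B' N : Type*} (a : B → N → Option B) (b : B' → N → Option B')
    (g : B → B') : Prop :=
  ∀ y n, Option.map g (a y n) = b (g y) n

/-- A morphism of systems with termination (`T X = 1 + X` coalgebras). -/
def TMorph {X Y : Type*} (g : X → Option X) (h : Y → Option Y) (f : X → Y) : Prop :=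
  ∀ x, Option.map f (g x) = h (f x)

/-- `Join(σ, a)(x, y) = ⇓` if `(a y)(out_σ x) = ⇓`, else `(tr_σ x, (a y)(out_σ x))`. -/
def joinMap {A B N : Type*} (out : A → N) (tr : A → A) (a : B → N → Option B) :
    A × B → Option (A × B) :=
  fun p => (a p.2 (out p.1)).map fun y => (tr p.1, y)

/-- `Join` is a bifunctor `Sys(S) × Sys(D) → Sys(T)`: it preserves identities and
composition, and for an `S`-morphism `f` and a `D`-morphism `g`, `f × g` is a
`T`-morphism `Join(σ, a) → Join(τ, b)`. -/
theorem join_bifunctor {N : Type} [Fintype N] :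
    (∀ (A B : Type) (out : A → N) (tr : A → A) (a : B → N → Option B),
      Prod.map (id : A → A) (id : B → B) = id ∧
        TMorph (joinMap out tr a) (joinMap out tr a) id) ∧
    (∀ (A A' A'' B B' B'' : Type) (f : A → A') (f' : A' → A'') (g : B → B')
        (g' : B' → B''),
      Prod.map (f' ∘ f) (g' ∘ g) = Prod.map f' g' ∘ Prod.map f g) ∧
    (∀ (A A' B B' : Type) (out : A → N) (tr : A → A) (out' : A' → N) (tr' : A' → A')
        (a : B → N → Option B) (b : B' → N → Option B') (f : A → A') (g : B → B'),
      SMorph out tr out' tr' f → DetMorph a b g →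
        TMorph (joinMap out tr a) (joinMap out' tr' b) (Prod.map f g)) := by
  refine ⟨fun A B out tr a => ⟨rfl, fun p => by simp [joinMap]⟩,
    fun _ _ _ _ _ _ _ _ _ _ => rfl,
    fun A A' B B' out tr out' tr' a b f g hf hg p => ?_⟩
  obtain ⟨x, y⟩ := p
  simp only [joinMap, Prod.map, ← hg y (out x), hf.1, Option.map_map]
  cases a y (out x) with
  | none => rfl
  | some z => simp [hf.2 x]
end

section
/- If σ ←(p_σ)− ρ −(p_τ)→ τ is a bisimulation of systems with output and a ←(q_a)− r −(q_b)→ b is a bisimulation of detectors, then Join(ρ, r) with legs Join(p_σ, q_a) = p_σ × q_a and Join(p_τ, q_b) = p_τ × q_b is a bisimulation of Join(σ, a) and Join(τ, b). -/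
/-- Joint injectivity: the mono-span condition in `Set`. -/
def JointlyInjective {R X Y : Type*} (p : R → X) (q : R → Y) : Prop :=
  ∀ r r', p r = p r' → q r = q r' → r = r'

/-- `Join` preserves bisimulations: from a bisimulation `σ ← ρ → τ` of systems with
output and a bisimulation `a ← r → b` of detectors, the span with legs
`p_σ × q_a` and `p_τ × q_b` is a bisimulation of `Join(σ, a)` and `Join(τ, b)`. -/
theorem join_preserves_bisimulations {N : Type} [Fintype N]
    (A A' R B B' Rd : Type)
    (out : A → N) (tr : A → A) (out' : A' → N) (tr' : A' → A')
    (outR : R → N) (trR : R → R)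
    (a : B → N → Option B) (b : B' → N → Option B') (r : Rd → N → Option Rd)
    (pσ : R → A) (pτ : R → A') (qa : Rd → B) (qb : Rd → B')
    (hpσ : SMorph outR trR out tr pσ) (hpτ : SMorph outR trR out' tr' pτ)
    (hρ : JointlyInjective pσ pτ)
    (hqa : DetMorph r a qa) (hqb : DetMorph r b qb)
    (hr : JointlyInjective qa qb) :
    TMorph (joinMap outR trR r) (joinMap out tr a) (Prod.map pσ qa) ∧
    TMorph (joinMap outR trR r) (joinMap out' tr' b) (Prod.map pτ qb) ∧
    JointlyInjective (Prod.map pσ qa) (Prod.map pτ qb) := by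
  refine ⟨?_, ?_, ?_⟩
  · rintro ⟨x, y⟩
    simp only [joinMap, Prod.map, Option.map_map, hpσ.1 x, ← hqa y (outR x),
      Option.map_map]
    congr 1
    funext z
    simp [hpσ.2 x]
  · rintro ⟨x, y⟩
    simp only [joinMap, Prod.map, Option.map_map, hpτ.1 x, ← hqb y (outR x),
      Option.map_map]
    congr 1
    funext z
    simp [hpτ.2 x]
  · rintro ⟨x, y⟩ ⟨x', y'⟩ h1 h2
    simp only [Prod.map, Prod.mk.injEq] at h1 h2
    have hx := hρ x x' h1.1 h2.1
    have hy := hr y y' h1.2 h2.2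
    simp [hx, hy]
end
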